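/- Let $\lambda>0$, $0<\beta<\alpha$, $0\leq\gamma<\alpha$, and $T>0$. Then $\sum_{j\in\mathbb{Z}}\int_0^T 2^{\beta j}e^{-\lambda 2^{\alpha j}(T-\tau)}\tau^{-\gamma/\alpha}\,d\tau\leq C\,T^{1-\beta/\alpha-\gamma/\alpha}$ for some constant $C=C(\lambda,\alpha,\beta,\gamma)>0$ independent of $T$. -/

import Mathlib

/-!
By Tonelli the sum over `j` may be taken inside the integral. With `y = λ 2^{αj} s`, the dyadic
sum `∑_j 2^{βj} e^{-λ 2^{αj} s}` equals `(λ s)^{-β/α} ∑_j y^{β/α} e^{-y}`, a sum over a geometric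
sequence of a function bounded by `min (y^{β/α}, y^{β/α - 1})`; as `0 < β/α < 1` it is bounded
independently of `s`. What remains is the Beta-type integral `∫_0^T (T-τ)^{-β/α} τ^{-γ/α} dτ`,
which scales like `T^{1-β/α-γ/α}`.
-/

open MeasureTheory Set
open scoped ENNReal

theorem ENNReal.tsum_ofReal_pow {q : ℝ} (hq0 : 0 ≤ q) (hq1 : q < 1) :
    ∑' n : ℕ, ENNReal.ofReal (q ^ n) = ENNReal.ofReal (1 - q)⁻¹ := by
  simp_rw [ENNReal.ofReal_pow hq0, ENNReal.tsum_geometric]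
  rw [ENNReal.ofReal_inv_of_pos (by linarith), ENNReal.ofReal_sub _ hq0, ENNReal.ofReal_one]

theorem tsum_ofReal_comp_zpow_mul_le {r ε δ x : ℝ} (hr : 1 < r) (hε : 0 < ε) (hδ : 0 < δ)
    (hx : 0 < x) {g : ℝ → ℝ} (hg_zero : ∀ y, 0 < y → g y ≤ y ^ ε)
    (hg_top : ∀ y, 0 < y → g y ≤ y ^ (-δ)) :
    ∑' j : ℤ, ENNReal.ofReal (g (r ^ j * x)) ≤
      ENNReal.ofReal ((1 - r ^ (-δ))⁻¹ + (1 - r ^ (-ε))⁻¹) := by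
  have hr0 : 0 < r := one_pos.trans hr
  -- With `x = r ^ k * y`, `y ∈ [1, r)`, the terms with `j + k = n ≥ 0` are at most
  -- `(r ^ (-δ)) ^ n` and those with `j + k = -(n + 1)` at most `(r ^ (-ε)) ^ n`.
  obtain ⟨k, hkx, hxk⟩ := exists_mem_Ico_zpow hx hr
  set y := x / r ^ k
  have hy1 : 1 ≤ y := (one_le_div (zpow_pos hr0 k)).2 hkx
  have hyr : y < r := by
    rw [div_lt_iff₀ (zpow_pos hr0 k), ← zpow_one_add₀ hr0.ne', add_comm]; exact hxk
  have hshift (m : ℤ) : r ^ (m - k) * x = r ^ m * y := by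
    rw [zpow_sub₀ hr0.ne']; ring
  have hq (t : ℝ) (ht : 0 < t) : r ^ (-t) < 1 :=
    Real.rpow_lt_one_of_one_lt_of_neg hr (neg_neg_of_pos ht)
  rw [← (Equiv.subRight k).tsum_eq, tsum_of_nat_of_neg_add_one ENNReal.summable ENNReal.summable,
    ENNReal.ofReal_add (inv_pos.2 (sub_pos.2 (hq δ hδ))).le (inv_pos.2 (sub_pos.2 (hq ε hε))).le,
    ← ENNReal.tsum_ofReal_pow (Real.rpow_nonneg hr0.le _) (hq δ hδ),
    ← ENNReal.tsum_ofReal_pow (Real.rpow_nonneg hr0.le _) (hq ε hε)]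
  gcongr with n n
  · have hpos : 0 < r ^ n * y := by positivity
    calc g (r ^ ((n : ℤ) - k) * x) ≤ (r ^ n * y) ^ (-δ) := by
          rw [hshift, zpow_natCast]; exact hg_top _ hpos
      _ ≤ (r ^ n) ^ (-δ) :=
          Real.rpow_le_rpow_of_nonpos (by positivity) (le_mul_of_one_le_right (by positivity) hy1)
            (by linarith)
      _ = (r ^ (-δ)) ^ n := (Real.rpow_pow_comm hr0.le _ n).symm
  · have hpos : 0 < r ^ (-((n : ℤ) + 1)) * y := by positivity
    have hlt : r ^ (-((n : ℤ) + 1)) * y ≤ (r ^ n)⁻¹ :=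
      calc r ^ (-((n : ℤ) + 1)) * y ≤ r ^ (-((n : ℤ) + 1)) * r := by gcongr
        _ = (r ^ n)⁻¹ := by
          rw [← zpow_add_one₀ hr0.ne', neg_add, neg_add_cancel_right, zpow_neg, zpow_natCast]
    calc g (r ^ (-((n : ℤ) + 1) - k) * x) ≤ (r ^ (-((n : ℤ) + 1)) * y) ^ ε := by
          rw [hshift]; exact hg_zero _ hpos
      _ ≤ ((r ^ n)⁻¹) ^ ε := Real.rpow_le_rpow hpos.le hlt hε.le
      _ = (r ^ (-ε)) ^ n := by
          rw [Real.inv_rpow (by positivity), ← Real.rpow_pow_comm hr0.le, Real.rpow_neg hr0.le,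
            inv_pow]

theorem Real.exp_neg_le_inv {y : ℝ} (hy : 0 < y) : Real.exp (-y) ≤ y⁻¹ := by
  rw [Real.exp_neg]
  exact inv_anti₀ hy (by linarith [Real.add_one_le_exp y])

theorem tsum_two_rpow_mul_exp_le {lam α β s : ℝ} (hlam : 0 < lam) (hβ : 0 < β) (hβα : β < α)
    (hs : 0 < s) :
    ∑' j : ℤ, ENNReal.ofReal ((2 : ℝ) ^ (β * j) * Real.exp (-(lam * 2 ^ (α * j) * s))) ≤
      ENNReal.ofReal (((1 - 2 ^ (β - α))⁻¹ + (1 - 2 ^ (-β))⁻¹) * lam ^ (-(β / α)) *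
        s ^ (-(β / α))) := by
  have hα : 0 < α := hβ.trans hβα
  have hx : 0 < lam * s := mul_pos hlam hs
  set p := β / α
  have hp0 : 0 < p := div_pos hβ hα
  have hp1 : p < 1 := (div_lt_one hα).2 hβα
  -- In the variable `y = 2 ^ (α j) λ s` the summand is `(λ s) ^ (-p) * y ^ p * exp (-y)`.
  have hterm (j : ℤ) : (2 : ℝ) ^ (β * j) * Real.exp (-(lam * 2 ^ (α * j) * s)) =
      (lam * s) ^ (-p) *
        (((2 ^ α) ^ j * (lam * s)) ^ p * Real.exp (-((2 ^ α) ^ j * (lam * s)))) := by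
    have h2j : ((2 : ℝ) ^ α) ^ j = 2 ^ (α * j) := by
      rw [← Real.rpow_intCast, ← Real.rpow_mul zero_le_two]
    have hβj : ((2 : ℝ) ^ (α * j)) ^ p = 2 ^ (β * j) := by
      rw [← Real.rpow_mul zero_le_two, mul_right_comm, mul_div_cancel₀ _ hα.ne']
    rw [h2j, Real.mul_rpow (by positivity) hx.le, hβj, Real.rpow_neg hx.le]
    field_simp
  have hr : (1 : ℝ) < 2 ^ α := Real.one_lt_rpow one_lt_two hα
  have hsum := tsum_ofReal_comp_zpow_mul_le (g := fun y => y ^ p * Real.exp (-y)) hr hp0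
    (sub_pos.2 hp1) hx
    (fun y _ => mul_le_of_le_one_right (by positivity) (Real.exp_le_one_iff.2 (by linarith)))
    (fun y hy => by
      rw [neg_sub, Real.rpow_sub_one hy.ne', div_eq_mul_inv]
      exact mul_le_mul_of_nonneg_left (Real.exp_neg_le_inv hy) (by positivity))
  have hr_pow (t : ℝ) : ((2 : ℝ) ^ α) ^ (-t) = 2 ^ (-(α * t)) := by
    rw [← Real.rpow_mul zero_le_two, mul_neg]
  rw [hr_pow, hr_pow, mul_sub, mul_one, mul_div_cancel₀ _ hα.ne', neg_sub] at hsum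
  simp_rw [hterm, ENNReal.ofReal_mul (Real.rpow_nonneg hx.le _), ENNReal.tsum_mul_left]
  rw [mul_assoc, ← Real.mul_rpow hlam.le hs.le, mul_comm _ ((lam * s) ^ _),
    ENNReal.ofReal_mul (Real.rpow_nonneg hx.le _)]
  gcongr

theorem lintegral_Ioo_rpow {c T : ℝ} (hc : -1 < c) (hT : 0 < T) :
    ∫⁻ τ in Ioo 0 T, ENNReal.ofReal (τ ^ c) = ENNReal.ofReal (T ^ (c + 1) / (c + 1)) := by
  rw [Measure.restrict_congr_set Ioo_ae_eq_Ioc, ← ofReal_integral_eq_lintegral_ofReal,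
    ← intervalIntegral.integral_of_le hT.le, integral_rpow (Or.inl hc),
    Real.zero_rpow (by linarith), sub_zero]
  · exact (intervalIntegral.intervalIntegrable_rpow' hc).1
  · filter_upwards [ae_restrict_mem measurableSet_Ioc] with τ hτ
    exact Real.rpow_nonneg hτ.1.le c

theorem setLIntegral_Ioo_comp_sub_left (f : ℝ → ℝ≥0∞) (T : ℝ) :
    ∫⁻ τ in Ioo 0 T, f (T - τ) = ∫⁻ τ in Ioo 0 T, f τ := by
  have hmem (τ : ℝ) : T - τ ∈ Ioo 0 T ↔ τ ∈ Ioo 0 T := by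
    simp only [mem_Ioo]; constructor <;> rintro ⟨h₁, h₂⟩ <;> constructor <;> linarith
  calc ∫⁻ τ in Ioo 0 T, f (T - τ) = ∫⁻ τ, (Ioo 0 T).indicator f (T - τ) := by
        rw [← lintegral_indicator measurableSet_Ioo]
        congr with τ
        simp only [indicator, hmem]
    _ = ∫⁻ τ in Ioo 0 T, f τ := by
        rw [lintegral_sub_left_eq_self, lintegral_indicator measurableSet_Ioo]

theorem lintegral_Ioo_sub_rpow_mul_rpow_le {a b T : ℝ} (ha0 : 0 ≤ a) (ha1 : a < 1) (hb0 : 0 ≤ b)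
    (hb1 : b < 1) (hT : 0 < T) :
    ∫⁻ τ in Ioo 0 T, ENNReal.ofReal ((T - τ) ^ (-a) * τ ^ (-b)) ≤
      ENNReal.ofReal ((2 ^ a / (1 - b) + 2 ^ b / (1 - a)) * T ^ (1 - a - b)) := by
  have hT2 : 0 < T / 2 := half_pos hT
  -- Whichever of `τ`, `T - τ` is the larger one is at least `T / 2`.
  have hsplit : ∀ τ ∈ Ioo 0 T, ENNReal.ofReal ((T - τ) ^ (-a) * τ ^ (-b)) ≤
      ENNReal.ofReal ((T / 2) ^ (-a) * τ ^ (-b)) +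
        ENNReal.ofReal ((T / 2) ^ (-b) * (T - τ) ^ (-a)) := by
    rintro τ ⟨hτ0, hτT⟩
    rcases le_total τ (T / 2) with h | h
    · refine le_trans (ENNReal.ofReal_le_ofReal ?_) le_self_add
      exact mul_le_mul_of_nonneg_right
        (Real.rpow_le_rpow_of_nonpos hT2 (by linarith) (by linarith)) (by positivity)
    · refine le_trans (ENNReal.ofReal_le_ofReal ?_) le_add_self
      rw [mul_comm]
      exact mul_le_mul_of_nonneg_right
        (Real.rpow_le_rpow_of_nonpos hT2 h (by linarith)) (Real.rpow_nonneg (by linarith) _)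
  have hhalf (c : ℝ) : (T / 2) ^ (-c) = 2 ^ c * T ^ (-c) := by
    rw [Real.div_rpow hT.le zero_le_two, Real.rpow_neg zero_le_two, div_inv_eq_mul, mul_comm]
  have hTa : T ^ (-a) * T ^ (-b + 1) = T ^ (1 - a - b) := by
    rw [← Real.rpow_add hT]; ring_nf
  have hTb : T ^ (-b) * T ^ (-a + 1) = T ^ (1 - a - b) := by
    rw [← Real.rpow_add hT]; ring_nf
  calc _ ≤ ∫⁻ τ in Ioo 0 T, (ENNReal.ofReal ((T / 2) ^ (-a) * τ ^ (-b)) +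
        ENNReal.ofReal ((T / 2) ^ (-b) * (T - τ) ^ (-a))) :=
        setLIntegral_mono' measurableSet_Ioo hsplit
    _ = ENNReal.ofReal ((T / 2) ^ (-a)) * ENNReal.ofReal (T ^ (-b + 1) / (-b + 1)) +
        ENNReal.ofReal ((T / 2) ^ (-b)) * ENNReal.ofReal (T ^ (-a + 1) / (-a + 1)) := by
        rw [lintegral_add_left (by fun_prop)]
        simp only [ENNReal.ofReal_mul (Real.rpow_nonneg hT2.le _)]
        rw [lintegral_const_mul' _ _ ENNReal.ofReal_ne_top,
          lintegral_const_mul' _ _ ENNReal.ofReal_ne_top,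
          setLIntegral_Ioo_comp_sub_left (fun t => ENNReal.ofReal (t ^ (-a))),
          lintegral_Ioo_rpow (by linarith) hT, lintegral_Ioo_rpow (by linarith) hT]
    _ = _ := by
        have hI (c : ℝ) (hc : c < 1) : 0 ≤ T ^ (-c + 1) / (-c + 1) :=
          div_nonneg (Real.rpow_nonneg hT.le _) (by linarith)
        rw [← ENNReal.ofReal_mul (by positivity), ← ENNReal.ofReal_mul (by positivity),
          ← ENNReal.ofReal_add (mul_nonneg (by positivity) (hI b hb1))
            (mul_nonneg (by positivity) (hI a ha1)), hhalf, hhalf]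
        congr 1
        linear_combination (2 ^ a / (1 - b)) * hTa + (2 ^ b / (1 - a)) * hTb

/-- Summed dyadic integral bound (2.13.8.1): for `λ > 0`, `0 < β < α`, `0 ≤ γ < α`,
`∑_{j∈ℤ} ∫_0^T 2^{βj} e^{-λ2^{αj}(T-τ)} τ^{-γ/α} dτ ≤ C T^{1-β/α-γ/α}`. -/
theorem stmt5 (lam α β γ : ℝ) (hlam : 0 < lam) (hβ0 : 0 < β) (hβα : β < α)
    (hγ0 : 0 ≤ γ) (hγα : γ < α) :
    ∃ C : ℝ, 0 < C ∧ ∀ T : ℝ, 0 < T →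
      (∑' j : ℤ, ∫⁻ τ in Ioo (0:ℝ) T,
          ENNReal.ofReal ((2:ℝ) ^ (β * (j:ℝ)) *
            Real.exp (-(lam * (2:ℝ) ^ (α * (j:ℝ)) * (T - τ))) * τ ^ (-(γ / α)))) ≤
        ENNReal.ofReal (C * T ^ (1 - β / α - γ / α)) := by
  have hα : 0 < α := hβ0.trans hβα
  have hp1 : β / α < 1 := (div_lt_one hα).2 hβα
  have hq1 : γ / α < 1 := (div_lt_one hα).2 hγα
  set K := (1 - (2 : ℝ) ^ (β - α))⁻¹ + (1 - (2 : ℝ) ^ (-β))⁻¹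
  have hK : 0 < K := add_pos
    (inv_pos.2 (sub_pos.2 (Real.rpow_lt_one_of_one_lt_of_neg one_lt_two (sub_neg.2 hβα))))
    (inv_pos.2 (sub_pos.2 (Real.rpow_lt_one_of_one_lt_of_neg one_lt_two (neg_neg_of_pos hβ0))))
  set B := 2 ^ (β / α) / (1 - γ / α) + 2 ^ (γ / α) / (1 - β / α)
  have hB : 0 < B :=
    add_pos (div_pos (by positivity) (by linarith)) (div_pos (by positivity) (by linarith))
  refine ⟨K * lam ^ (-(β / α)) * B, by positivity, fun T hT => ?_⟩
  calc _ = ∫⁻ τ in Ioo 0 T, ∑' j : ℤ, ENNReal.ofReal ((2:ℝ) ^ (β * (j:ℝ)) *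
          Real.exp (-(lam * (2:ℝ) ^ (α * (j:ℝ)) * (T - τ))) * τ ^ (-(γ / α))) :=
        (lintegral_tsum fun j => by fun_prop).symm
    _ ≤ ∫⁻ τ in Ioo 0 T, ENNReal.ofReal (K * lam ^ (-(β / α)) *
          ((T - τ) ^ (-(β / α)) * τ ^ (-(γ / α)))) := by
        refine setLIntegral_mono' measurableSet_Ioo fun τ ⟨hτ0, hτT⟩ => ?_
        simp_rw [← mul_assoc, ENNReal.ofReal_mul' (Real.rpow_nonneg hτ0.le _),
          ENNReal.tsum_mul_right]
        gcongr
        exact tsum_two_rpow_mul_exp_le hlam hβ0 hβα (sub_pos.2 hτT)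
    _ = ENNReal.ofReal (K * lam ^ (-(β / α))) * ∫⁻ τ in Ioo 0 T,
          ENNReal.ofReal ((T - τ) ^ (-(β / α)) * τ ^ (-(γ / α))) := by
        simp only [ENNReal.ofReal_mul (by positivity : 0 ≤ K * lam ^ (-(β / α)))]
        exact lintegral_const_mul' _ _ ENNReal.ofReal_ne_top
    _ ≤ ENNReal.ofReal (K * lam ^ (-(β / α))) * ENNReal.ofReal (B * T ^ (1 - β / α - γ / α)) := by
        gcongr
        exact lintegral_Ioo_sub_rpow_mul_rpow_le (by positivity) hp1 (by positivity) hq1 hT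
    _ = _ := by rw [← ENNReal.ofReal_mul (by positivity)]; ring_nf
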